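/- arXiv:2604.00692 — 5 statements merged into one kernel-verified Lean document; each statement's English description precedes it below -/
import Mathlib

section
/- Let α, β ∈ [0,1], let ρ be a polynomial weight on ℝ^d and ω a polynomial weight on ℝ^ϑ, and let f : ℝ^d × ℝ^ϑ → ℝ. Suppose there is M ≥ 0 such that: (i) for all x, z ∈ ℝ^d with |z| ≤ 1 and all y ∈ ℝ^ϑ, |f(x+z, y) − f(x, y)| ≤ M·|z|^α·ρ(x)·ω(y); and (ii) for all x ∈ ℝ^d and all y, h ∈ ℝ^ϑ with |h| ≤ 1, |f(x, y+h) − f(x, y)| ≤ M·|h|^β·ρ(x)·ω(y). Then there exists a constant C > 0, depending only on ρ and ω, such that for every θ ∈ [0,1], all z ∈ ℝ^d with |z| ≤ 1 and all h ∈ ℝ^ϑ with |h| ≤ 1, the mixed second-order increment Δ_{z,h}f(x,y) := f(x+z, y+h) − f(x+z, y) − f(x, y+h) + f(x, y) satisfies |Δ_{z,h}f(x,y)| ≤ C·M·|z|^{θα}·|h|^{(1−θ)β}·ρ(x)·ω(y) for all (x,y) ∈ ℝ^d × ℝ^ϑ. -/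
/-- A polynomial weight: an everywhere positive function comparable to `(1 + ‖x‖) ^ r`
for some real exponent `r`. -/
def IsPolyWeight {E : Type*} [NormedAddCommGroup E] (ρ : E → ℝ) : Prop :=
  (∀ x, 0 < ρ x) ∧
  ∃ r c C : ℝ, 0 < c ∧ c ≤ C ∧
    ∀ x, c * (1 + ‖x‖) ^ r ≤ ρ x ∧ ρ x ≤ C * (1 + ‖x‖) ^ r

lemma rpow_shift (r a s : ℝ) (ha : 0 ≤ a) (hs : 0 ≤ s) (h1 : s ≤ a + 1) (h2 : a ≤ s + 1) :
    (1 + s) ^ r ≤ 2 ^ |r| * (1 + a) ^ r := by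
  rcases le_or_gt 0 r with hr | hr
  · rw [abs_of_nonneg hr]
    calc (1 + s) ^ r ≤ (2 * (1 + a)) ^ r := by
          apply Real.rpow_le_rpow (by linarith) (by linarith) hr
      _ = 2 ^ r * (1 + a) ^ r := Real.mul_rpow (by norm_num) (by linarith)
  · rw [abs_of_neg hr]
    have hhalf : (1 + a) / 2 ≤ 1 + s := by linarith
    calc (1 + s) ^ r ≤ ((1 + a) / 2) ^ r :=
          Real.rpow_le_rpow_of_nonpos (by linarith) hhalf hr.le
      _ = (1 + a) ^ r / 2 ^ r := Real.div_rpow (by linarith) (by norm_num) r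
      _ = 2 ^ (-r) * (1 + a) ^ r := by
          rw [Real.rpow_neg (by norm_num)]; ring

lemma weight_translate {E : Type*} [NormedAddCommGroup E] {ρ : E → ℝ} (hρ : IsPolyWeight ρ) :
    ∃ K : ℝ, 1 ≤ K ∧ ∀ x z : E, ‖z‖ ≤ 1 → ρ (x + z) ≤ K * ρ x := by
  obtain ⟨hpos, r, c, C, hc, hcC, hb⟩ := hρ
  refine ⟨max 1 ((C / c) * 2 ^ |r|), le_max_left _ _, fun x z hz => ?_⟩
  have h1 : ‖x + z‖ ≤ ‖x‖ + 1 := le_trans (norm_add_le _ _) (by linarith)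
  have h2 : ‖x‖ ≤ ‖x + z‖ + 1 := by
    have := norm_sub_norm_le x (x + z)
    have h3 : x - (x + z) = -z := by abel
    rw [h3, norm_neg] at this
    linarith
  have key := rpow_shift r (‖x‖) (‖x + z‖) (norm_nonneg _) (norm_nonneg _) h1 h2
  have hCp : 0 < C := lt_of_lt_of_le hc hcC
  have h2r : (0:ℝ) < 2 ^ |r| := Real.rpow_pos_of_pos (by norm_num) _
  have hρx : c * (1 + ‖x‖) ^ r ≤ ρ x := (hb x).1
  calc ρ (x + z) ≤ C * (1 + ‖x + z‖) ^ r := (hb _).2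
    _ ≤ C * (2 ^ |r| * (1 + ‖x‖) ^ r) := by
        exact mul_le_mul_of_nonneg_left key hCp.le
    _ = (C / c) * 2 ^ |r| * (c * (1 + ‖x‖) ^ r) := by field_simp
    _ ≤ (C / c) * 2 ^ |r| * ρ x := by
        apply mul_le_mul_of_nonneg_left hρx
        positivity
    _ ≤ max 1 ((C / c) * 2 ^ |r|) * ρ x := by
        apply mul_le_mul_of_nonneg_right (le_max_right _ _) (hpos x).le

/-- Interpolation bound for the mixed second-order increment of a function which is
`α`-Hölder in the first variable and `β`-Hölder in the second variable. -/
theorem mixed_increment_interpolation {d ϑ : ℕ}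
    (α β : ℝ) (hα : α ∈ Set.Icc (0 : ℝ) 1) (hβ : β ∈ Set.Icc (0 : ℝ) 1)
    (ρ : EuclideanSpace ℝ (Fin d) → ℝ) (ω : EuclideanSpace ℝ (Fin ϑ) → ℝ)
    (hρ : IsPolyWeight ρ) (hω : IsPolyWeight ω)
    (f : EuclideanSpace ℝ (Fin d) → EuclideanSpace ℝ (Fin ϑ) → ℝ)
    (M : ℝ) (hM : 0 ≤ M)
    (hx : ∀ (x z : EuclideanSpace ℝ (Fin d)) (y : EuclideanSpace ℝ (Fin ϑ)), ‖z‖ ≤ 1 →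
      |f (x + z) y - f x y| ≤ M * ‖z‖ ^ α * ρ x * ω y)
    (hy : ∀ (x : EuclideanSpace ℝ (Fin d)) (y h : EuclideanSpace ℝ (Fin ϑ)), ‖h‖ ≤ 1 →
      |f x (y + h) - f x y| ≤ M * ‖h‖ ^ β * ρ x * ω y) :
    ∃ C : ℝ, 0 < C ∧
      ∀ θ ∈ Set.Icc (0 : ℝ) 1,
        ∀ (z : EuclideanSpace ℝ (Fin d)), ‖z‖ ≤ 1 →
        ∀ (h : EuclideanSpace ℝ (Fin ϑ)), ‖h‖ ≤ 1 →
        ∀ (x : EuclideanSpace ℝ (Fin d)) (y : EuclideanSpace ℝ (Fin ϑ)),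
          |f (x + z) (y + h) - f (x + z) y - f x (y + h) + f x y|
            ≤ C * M * ‖z‖ ^ (θ * α) * ‖h‖ ^ ((1 - θ) * β) * ρ x * ω y := by
  obtain ⟨Kρ, hKρ1, hKρ⟩ := weight_translate hρ
  obtain ⟨Kω, hKω1, hKω⟩ := weight_translate hω
  obtain ⟨hρpos, _⟩ := hρ
  obtain ⟨hωpos, _⟩ := hω
  set K : ℝ := max Kρ Kω with hK
  have hK1 : 1 ≤ K := le_trans hKρ1 (le_max_left _ _)
  refine ⟨K + 1, by linarith, fun θ hθ z hz h hh x y => ?_⟩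
  have hθ0 : 0 ≤ θ := hθ.1
  have hθ1 : 0 ≤ 1 - θ := by linarith [hθ.2]
  set Δ : ℝ := f (x + z) (y + h) - f (x + z) y - f x (y + h) + f x y with hΔ
  set S : ℝ := (K + 1) * M * ρ x * ω y with hS
  have hSnn : 0 ≤ S := by
    have := (hρpos x).le; have := (hωpos y).le
    positivity
  set t1 : ℝ := ‖z‖ ^ α with ht1
  set t2 : ℝ := ‖h‖ ^ β with ht2
  have ht1nn : 0 ≤ t1 := Real.rpow_nonneg (norm_nonneg _) _
  have ht2nn : 0 ≤ t2 := Real.rpow_nonneg (norm_nonneg _) _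
  -- bound in the z-direction
  have hb1 : |Δ| ≤ S * t1 := by
    have e1 := hx x z (y + h) hz
    have e2 := hx x z y hz
    have e3 : ω (y + h) ≤ K * ω y :=
      le_trans (hKω y h hh) (mul_le_mul_of_nonneg_right (le_max_right _ _) (hωpos y).le)
    have habs : |Δ| ≤ |f (x + z) (y + h) - f x (y + h)| + |f (x + z) y - f x y| := by
      rw [hΔ]
      calc |f (x + z) (y + h) - f (x + z) y - f x (y + h) + f x y|
          = |(f (x + z) (y + h) - f x (y + h)) - (f (x + z) y - f x y)| := by ring_nf
        _ ≤ _ := abs_sub _ _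
    have e4 : M * ‖z‖ ^ α * ρ x * ω (y + h) ≤ M * ‖z‖ ^ α * ρ x * (K * ω y) := by
      apply mul_le_mul_of_nonneg_left e3
      have := (hρpos x).le; positivity
    calc |Δ| ≤ |f (x + z) (y + h) - f x (y + h)| + |f (x + z) y - f x y| := habs
      _ ≤ M * ‖z‖ ^ α * ρ x * (K * ω y) + M * ‖z‖ ^ α * ρ x * ω y := by
          exact add_le_add (le_trans e1 e4) e2
      _ = S * t1 := by rw [hS, ht1]; ring
  -- bound in the h-direction
  have hb2 : |Δ| ≤ S * t2 := by
    have e1 := hy (x + z) y h hh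
    have e2 := hy x y h hh
    have e3 : ρ (x + z) ≤ K * ρ x :=
      le_trans (hKρ x z hz) (mul_le_mul_of_nonneg_right (le_max_left _ _) (hρpos x).le)
    have habs : |Δ| ≤ |f (x + z) (y + h) - f (x + z) y| + |f x (y + h) - f x y| := by
      rw [hΔ]
      calc |f (x + z) (y + h) - f (x + z) y - f x (y + h) + f x y|
          = |(f (x + z) (y + h) - f (x + z) y) - (f x (y + h) - f x y)| := by ring_nf
        _ ≤ _ := abs_sub _ _
    have e4 : M * ‖h‖ ^ β * ρ (x + z) * ω y ≤ M * ‖h‖ ^ β * (K * ρ x) * ω y := by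
      apply mul_le_mul_of_nonneg_right _ (hωpos y).le
      apply mul_le_mul_of_nonneg_left e3
      positivity
    calc |Δ| ≤ |f (x + z) (y + h) - f (x + z) y| + |f x (y + h) - f x y| := habs
      _ ≤ M * ‖h‖ ^ β * (K * ρ x) * ω y + M * ‖h‖ ^ β * ρ x * ω y := by
          exact add_le_add (le_trans e1 e4) e2
      _ = S * t2 := by rw [hS, ht2]; ring
  -- interpolation
  have key : |Δ| ≤ S * (t1 ^ θ * t2 ^ (1 - θ)) := by
    calc |Δ| = |Δ| ^ (θ + (1 - θ)) := by
          rw [show θ + (1 - θ) = 1 by ring, Real.rpow_one]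
      _ = |Δ| ^ θ * |Δ| ^ (1 - θ) :=
          Real.rpow_add_of_nonneg (abs_nonneg _) hθ0 hθ1
      _ ≤ (S * t1) ^ θ * (S * t2) ^ (1 - θ) := by
          apply mul_le_mul
          · exact Real.rpow_le_rpow (abs_nonneg _) hb1 hθ0
          · exact Real.rpow_le_rpow (abs_nonneg _) hb2 hθ1
          · exact Real.rpow_nonneg (abs_nonneg _) _
          · exact Real.rpow_nonneg (mul_nonneg hSnn ht1nn) _
      _ = (S ^ θ * S ^ (1 - θ)) * (t1 ^ θ * t2 ^ (1 - θ)) := by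
          rw [Real.mul_rpow hSnn ht1nn, Real.mul_rpow hSnn ht2nn]; ring
      _ = S * (t1 ^ θ * t2 ^ (1 - θ)) := by
          rw [← Real.rpow_add_of_nonneg hSnn hθ0 hθ1,
            show θ + (1 - θ) = 1 by ring, Real.rpow_one]
  have et1 : t1 ^ θ = ‖z‖ ^ (θ * α) := by
    rw [ht1, ← Real.rpow_mul (norm_nonneg z), mul_comm α θ]
  have et2 : t2 ^ (1 - θ) = ‖h‖ ^ ((1 - θ) * β) := by
    rw [ht2, ← Real.rpow_mul (norm_nonneg h), mul_comm β (1 - θ)]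
  calc |Δ| ≤ S * (t1 ^ θ * t2 ^ (1 - θ)) := key
    _ = (K + 1) * M * ‖z‖ ^ (θ * α) * ‖h‖ ^ ((1 - θ) * β) * ρ x * ω y := by
        rw [et1, et2, hS]; ring
end

section
/- Let b : ℝ^d → ℝ^d, σ : ℝ^d → ℝ^{d×m}, H : ℝ^d → ℝ^ϑ and G : ℝ^d → ℝ^{ϑ×m} be measurable, and let Φ : ℝ^d → ℝ^ϑ be twice continuously differentiable with 𝓛₁Φ_i = −H_i for each component i = 1,…,ϑ. Define the ϑ×ϑ matrix field Γ₂(x) := H(x)·Φ(x)ᵀ + 2·G(x)σ(x)ᵀ·(∇Φ(x))ᵀ, i.e. (Γ₂)_{ij}(x) = H_i(x)Φ_j(x) + 2·Σ_k (G(x)σ(x)ᵀ)_{ik}·∂_{x_k}Φ_j(x). Let μ be a probability measure on ℝ^d such that all entries of G·Gᵀ and of Γ₂ are μ-integrable, for every ξ ∈ ℝ^ϑ the function x ↦ |σ(x)ᵀ∇⟨Φ(x), ξ⟩|² is μ-integrable, and for every ξ ∈ ℝ^ϑ the function 𝓛₁(⟨Φ, ξ⟩²) is μ-integrable with ∫ 𝓛₁(⟨Φ,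 ξ⟩²) dμ = 0. Define the ϑ×ϑ matrix 𝒢 := ∫_{ℝ^d} ( G(x)G(x)ᵀ + (Γ₂(x) + Γ₂(x)ᵀ)/2 ) μ(dx). Then 𝒢 is symmetric and for every ξ ∈ ℝ^ϑ, ⟨𝒢ξ, ξ⟩ = ∫_{ℝ^d} |G(x)ᵀξ + σ(x)ᵀ∇⟨Φ(x), ξ⟩|² μ(dx) ≥ 0; in particular 𝒢 is positive semidefinite. -/
noncomputable section

open MeasureTheory Matrix

/-- The `i`-th standard basis vector of `ℝ^d`. -/
def esingle {d : ℕ} (i : Fin d) : EuclideanSpace ℝ (Fin d) :=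
  EuclideanSpace.single i 1

/-- Partial derivative `∂_i ψ(x)`. -/
def pd {d : ℕ} (ψ : EuclideanSpace ℝ (Fin d) → ℝ)
    (x : EuclideanSpace ℝ (Fin d)) (i : Fin d) : ℝ :=
  fderiv ℝ ψ x (esingle i)

/-- Hessian entry `∂_i ∂_j ψ(x)` as the second iterated Fréchet derivative. -/
def hess2 {d : ℕ} (ψ : EuclideanSpace ℝ (Fin d) → ℝ)
    (x : EuclideanSpace ℝ (Fin d)) (i j : Fin d) : ℝ :=
  iteratedFDeriv ℝ 2 ψ x ![esingle i, esingle j]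

/-- The second-order operator
`𝓛₁ψ(x) := tr(σ(x)σ(x)ᵀ · ∇²ψ(x)) + b(x)·∇ψ(x)`. -/
def Lgen {d m : ℕ} (b : EuclideanSpace ℝ (Fin d) → EuclideanSpace ℝ (Fin d))
    (σ : EuclideanSpace ℝ (Fin d) → Matrix (Fin d) (Fin m) ℝ)
    (ψ : EuclideanSpace ℝ (Fin d) → ℝ) (x : EuclideanSpace ℝ (Fin d)) : ℝ :=
  (∑ i, ∑ j, (σ x * (σ x)ᵀ) i j * hess2 ψ x j i) + ∑ i, b x i * pd ψ x i

/-- The matrix field `Γ₂(x) = H(x)Φ(x)ᵀ + 2 G(x)σ(x)ᵀ (∇Φ(x))ᵀ`, entrywise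
`(Γ₂)_{ij}(x) = H_i(x)Φ_j(x) + 2 Σ_k (G(x)σ(x)ᵀ)_{ik} ∂_{x_k}Φ_j(x)`. -/
def Gamma2 {d m ϑ : ℕ}
    (σ : EuclideanSpace ℝ (Fin d) → Matrix (Fin d) (Fin m) ℝ)
    (H : EuclideanSpace ℝ (Fin d) → EuclideanSpace ℝ (Fin ϑ))
    (G : EuclideanSpace ℝ (Fin d) → Matrix (Fin ϑ) (Fin m) ℝ)
    (Φ : EuclideanSpace ℝ (Fin d) → EuclideanSpace ℝ (Fin ϑ))
    (x : EuclideanSpace ℝ (Fin d)) : Matrix (Fin ϑ) (Fin ϑ) ℝ :=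
  Matrix.of fun i j =>
    H x i * Φ x j + 2 * ∑ k, (G x * (σ x)ᵀ) i k * pd (fun z => Φ z j) x k

/-- The effective diffusion matrix `𝒢 = ∫ ( GGᵀ + (Γ₂ + Γ₂ᵀ)/2 ) dμ` (entrywise). -/
def calG {d m ϑ : ℕ}
    (σ : EuclideanSpace ℝ (Fin d) → Matrix (Fin d) (Fin m) ℝ)
    (H : EuclideanSpace ℝ (Fin d) → EuclideanSpace ℝ (Fin ϑ))
    (G : EuclideanSpace ℝ (Fin d) → Matrix (Fin ϑ) (Fin m) ℝ)
    (Φ : EuclideanSpace ℝ (Fin d) → EuclideanSpace ℝ (Fin ϑ))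
    (μ : Measure (EuclideanSpace ℝ (Fin d))) : Matrix (Fin ϑ) (Fin ϑ) ℝ :=
  Matrix.of fun i j =>
    ∫ x, ((G x * (G x)ᵀ) i j
      + ((Gamma2 σ H G Φ x) i j + (Gamma2 σ H G Φ x) j i) / 2) ∂μ


/-!
Fix `ξ` and put `ψ = ⟨Φ, ξ⟩`. The operator `𝓛₁` is linear, so the cell equations give
`𝓛₁ψ = -⟨H, ξ⟩`, and it satisfies the carré du champ identity
`𝓛₁(ψ²) = 2ψ 𝓛₁ψ + 2|σᵀ∇ψ|²`. Expanding the square, these two facts give pointwise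
`|Gᵀξ + σᵀ∇ψ|² = ⟨(GGᵀ + (Γ₂ + Γ₂ᵀ)/2) ξ, ξ⟩ + 𝓛₁(ψ²)/2`,
and the last term integrates to zero against `μ`.
-/

open Finset

section PartialDerivatives

variable {d : ℕ} {f g : EuclideanSpace ℝ (Fin d) → ℝ} {x : EuclideanSpace ℝ (Fin d)}

lemma pd_mul (hf : DifferentiableAt ℝ f x) (hg : DifferentiableAt ℝ g x) (i : Fin d) :
    pd (fun y => f y * g y) x i = pd f x i * g x + f x * pd g x i := by
  simp only [pd, fderiv_fun_mul hf hg, _root_.add_apply, _root_.smul_apply, smul_eq_mul]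
  ring

lemma pd_const_mul (hf : DifferentiableAt ℝ f x) (c : ℝ) (i : Fin d) :
    pd (fun y => c * f y) x i = c * pd f x i := by
  simp [pd, fderiv_const_mul hf]

lemma pd_sq (hg : DifferentiableAt ℝ g x) (i : Fin d) :
    pd (fun y => g y ^ 2) x i = 2 * g x * pd g x i := by
  simp only [sq, pd_mul hg hg]
  ring

lemma pd_sum_mul_const {ι : Type*} [Fintype ι] {f : ι → EuclideanSpace ℝ (Fin d) → ℝ}
    (hf : ∀ l, DifferentiableAt ℝ (f l) x) (c : ι → ℝ) (i : Fin d) :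
    pd (fun y => ∑ l, f l y * c l) x i = ∑ l, pd (f l) x i * c l := by
  simp [pd, fderiv_fun_sum fun l _ => (hf l).mul_const (c l), fderiv_mul_const (hf _), mul_comm]

lemma differentiable_pd (hf : ContDiff ℝ 2 f) (j : Fin d) :
    Differentiable ℝ (fun y => pd f y j) :=
  ((hf.fderiv_right (m := 1) (by norm_num)).differentiable one_ne_zero).clm_apply
    (differentiable_const _)

lemma hess2_eq_pd_pd (hf : ContDiff ℝ 2 f) (x : EuclideanSpace ℝ (Fin d)) (i j : Fin d) :
    hess2 f x i j = pd (fun y => pd f y j) x i := by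
  have hdf : DifferentiableAt ℝ (fderiv ℝ f) x :=
    (hf.fderiv_right (m := 1) (by norm_num)).differentiable one_ne_zero x
  simp [hess2, pd, iteratedFDeriv_two_apply, fderiv_clm_apply hdf (differentiableAt_const _)]

lemma hess2_sum_mul_const {ι : Type*} [Fintype ι] {f : ι → EuclideanSpace ℝ (Fin d) → ℝ}
    (hf : ∀ l, ContDiff ℝ 2 (f l)) (c : ι → ℝ) (x : EuclideanSpace ℝ (Fin d)) (i j : Fin d) :
    hess2 (fun y => ∑ l, f l y * c l) x i j = ∑ l, hess2 (f l) x i j * c l := by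
  have hf' : ∀ l, Differentiable ℝ (f l) := fun l => (hf l).differentiable two_ne_zero
  have hsum : ContDiff ℝ 2 (fun y => ∑ l, f l y * c l) :=
    ContDiff.sum fun l _ => (hf l).mul contDiff_const
  simp only [hess2_eq_pd_pd hsum, pd_sum_mul_const (fun l => hf' l _),
    pd_sum_mul_const (fun l => differentiable_pd (hf l) j _), hess2_eq_pd_pd (hf _)]

lemma hess2_sq (hg : ContDiff ℝ 2 g) (x : EuclideanSpace ℝ (Fin d)) (i j : Fin d) :
    hess2 (fun y => g y ^ 2) x i j = 2 * pd g x i * pd g x j + 2 * g x * hess2 g x i j := by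
  have hg' : Differentiable ℝ g := hg.differentiable two_ne_zero
  simp only [hess2_eq_pd_pd (hg.pow 2), pd_sq (hg' _),
    pd_mul ((hg' x).const_mul 2) (differentiable_pd hg j x), pd_const_mul (hg' x),
    hess2_eq_pd_pd hg]

end PartialDerivatives

section QuadraticForms

variable {R n k : Type*} [CommSemiring R] [Fintype n] [Fintype k]

lemma mul_transpose_mulVec_dotProduct (M : Matrix n k R) (v : n → R) :
    (M * Mᵀ) *ᵥ v ⬝ᵥ v = ∑ j, (∑ i, M i j * v i) ^ 2 := by
  rw [← mulVec_mulVec, dotProduct_comm, dotProduct_mulVec, ← mulVec_transpose]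
  simp [dotProduct, mulVec, sq]

lemma transpose_mulVec_dotProduct (A : Matrix n n R) (v : n → R) :
    Aᵀ *ᵥ v ⬝ᵥ v = A *ᵥ v ⬝ᵥ v := by
  rw [mulVec_transpose, ← dotProduct_mulVec, dotProduct_comm]

end QuadraticForms

section Generator

variable {d m : ℕ} (b : EuclideanSpace ℝ (Fin d) → EuclideanSpace ℝ (Fin d))
  (σ : EuclideanSpace ℝ (Fin d) → Matrix (Fin d) (Fin m) ℝ)

lemma Lgen_sum_mul_const {ι : Type*} [Fintype ι] {f : ι → EuclideanSpace ℝ (Fin d) → ℝ}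
    (hf : ∀ l, ContDiff ℝ 2 (f l)) (c : ι → ℝ) (x : EuclideanSpace ℝ (Fin d)) :
    Lgen b σ (fun y => ∑ l, f l y * c l) x = ∑ l, Lgen b σ (f l) x * c l := by
  simp only [Lgen, hess2_sum_mul_const hf,
    pd_sum_mul_const (fun l => (hf l).differentiable two_ne_zero x), add_mul, sum_add_distrib]
  congr 1
  · simp only [mul_sum, sum_mul, mul_assoc]
    exact (sum_congr rfl fun i _ => sum_comm).trans sum_comm
  · simp only [mul_sum, sum_mul, mul_assoc]
    exact sum_comm

lemma Lgen_sq {g : EuclideanSpace ℝ (Fin d) → ℝ} (hg : ContDiff ℝ 2 g)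
    (x : EuclideanSpace ℝ (Fin d)) :
    Lgen b σ (fun y => g y ^ 2) x
      = 2 * g x * Lgen b σ g x + 2 * ∑ k, (∑ j, σ x j k * pd g x j) ^ 2 := by
  have hσσ := mul_transpose_mulVec_dotProduct (σ x) (fun j => pd g x j)
  simp only [dotProduct, mulVec, sum_mul] at hσσ
  have hdiff : ∑ i, ∑ j, (σ x * (σ x)ᵀ) i j * hess2 (fun y => g y ^ 2) x j i
      = 2 * ∑ k, (∑ j, σ x j k * pd g x j) ^ 2
        + 2 * g x * ∑ i, ∑ j, (σ x * (σ x)ᵀ) i j * hess2 g x j i := by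
    simp only [hess2_sq hg, ← hσσ, mul_add, sum_add_distrib, mul_sum]
    congr 1 <;> exact sum_congr rfl fun i _ => sum_congr rfl fun j _ => by ring
  have hdrift : ∑ i, b x i * pd (fun y => g y ^ 2) x i = 2 * g x * ∑ i, b x i * pd g x i := by
    simp only [pd_sq (hg.differentiable two_ne_zero x), mul_sum]
    exact sum_congr rfl fun i _ => by ring
  rw [Lgen, Lgen, hdiff, hdrift]
  ring

end Generator

section CellProblem

variable {d m ϑ : ℕ} (σ : EuclideanSpace ℝ (Fin d) → Matrix (Fin d) (Fin m) ℝ)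
  (H : EuclideanSpace ℝ (Fin d) → EuclideanSpace ℝ (Fin ϑ))
  (G : EuclideanSpace ℝ (Fin d) → Matrix (Fin ϑ) (Fin m) ℝ)
  {Φ : EuclideanSpace ℝ (Fin d) → EuclideanSpace ℝ (Fin ϑ)}

lemma Gamma2_mulVec_dotProduct {x : EuclideanSpace ℝ (Fin d)}
    (hΦ : ∀ l, DifferentiableAt ℝ (fun y => Φ y l) x) (ξ : Fin ϑ → ℝ) :
    Gamma2 σ H G Φ x *ᵥ ξ ⬝ᵥ ξ
      = (∑ i, H x i * ξ i) * (∑ i, Φ x i * ξ i)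
        + 2 * ∑ k, (∑ i, G x i k * ξ i) * ∑ j, σ x j k * pd (fun z => ∑ i, Φ z i * ξ i) x j := by
  set J : Matrix (Fin d) (Fin ϑ) ℝ := of fun k l => pd (fun y => Φ y l) x k
  have hΓ : Gamma2 σ H G Φ x
      = vecMulVec (fun i => H x i) (fun i => Φ x i) + (2 : ℝ) • (G x * (σ x)ᵀ * J) := by
    ext i j
    simp [Gamma2, vecMulVec, J, mul_apply]
  have hJ : J *ᵥ ξ = fun k => pd (fun z => ∑ i, Φ z i * ξ i) x k := by
    ext k
    simp [J, mulVec, dotProduct, pd_sum_mul_const hΦ]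
  have hG : ∀ v, G x *ᵥ v ⬝ᵥ ξ = (G x)ᵀ *ᵥ ξ ⬝ᵥ v := fun v => by
    rw [dotProduct_comm, dotProduct_mulVec, mulVec_transpose]
  rw [hΓ, add_mulVec, add_dotProduct, vecMulVec_mulVec, smul_mulVec, smul_dotProduct,
    smul_dotProduct, op_smul_eq_mul, ← mulVec_mulVec, ← mulVec_mulVec, hJ, hG]
  rfl

def calGIntegrand (Φ : EuclideanSpace ℝ (Fin d) → EuclideanSpace ℝ (Fin ϑ))
    (x : EuclideanSpace ℝ (Fin d)) : Matrix (Fin ϑ) (Fin ϑ) ℝ :=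
  G x * (G x)ᵀ + (2 : ℝ)⁻¹ • (Gamma2 σ H G Φ x + (Gamma2 σ H G Φ x)ᵀ)

lemma calG_eq_integral_calGIntegrand (μ : Measure (EuclideanSpace ℝ (Fin d))) :
    calG σ H G Φ μ = of fun i j => ∫ x, calGIntegrand σ H G Φ x i j ∂μ := by
  ext i j
  simp [calG, calGIntegrand, div_eq_inv_mul, mul_add]

lemma calGIntegrand_transpose (x : EuclideanSpace ℝ (Fin d)) :
    (calGIntegrand σ H G Φ x)ᵀ = calGIntegrand σ H G Φ x := by
  simp [calGIntegrand, transpose_mul, add_comm]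

lemma calG_transpose (μ : Measure (EuclideanSpace ℝ (Fin d))) :
    (calG σ H G Φ μ)ᵀ = calG σ H G Φ μ := by
  rw [calG_eq_integral_calGIntegrand]
  ext i j
  exact integral_congr_ae <| ae_of_all _ fun x =>
    congr_fun₂ (calGIntegrand_transpose σ H G x) i j

lemma calGIntegrand_mulVec_dotProduct (x : EuclideanSpace ℝ (Fin d)) (ξ : Fin ϑ → ℝ) :
    calGIntegrand σ H G Φ x *ᵥ ξ ⬝ᵥ ξ
      = ∑ k, (∑ i, G x i k * ξ i) ^ 2 + Gamma2 σ H G Φ x *ᵥ ξ ⬝ᵥ ξ := by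
  rw [calGIntegrand, add_mulVec, add_dotProduct, mul_transpose_mulVec_dotProduct, smul_mulVec,
    smul_dotProduct, add_mulVec, add_dotProduct, transpose_mulVec_dotProduct, smul_eq_mul]
  ring

lemma sum_sq_eq_calGIntegrand_add_Lgen_sq
    (b : EuclideanSpace ℝ (Fin d) → EuclideanSpace ℝ (Fin d)) (hΦ : ContDiff ℝ 2 Φ)
    {x : EuclideanSpace ℝ (Fin d)}
    (hcell : ∀ i, Lgen b σ (fun y => Φ y i) x = -(H x i)) (ξ : Fin ϑ → ℝ) :
    ∑ k, ((∑ i, G x i k * ξ i) + ∑ j, σ x j k * pd (fun z => ∑ i, Φ z i * ξ i) x j) ^ 2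
      = calGIntegrand σ H G Φ x *ᵥ ξ ⬝ᵥ ξ
        + Lgen b σ (fun y => (∑ i, Φ y i * ξ i) ^ 2) x / 2 := by
  have hcoord : ∀ l, ContDiff ℝ 2 (fun y => Φ y l) := (contDiff_piLp 2).1 hΦ
  have hψ : ContDiff ℝ 2 (fun y => ∑ i, Φ y i * ξ i) :=
    ContDiff.sum fun l _ => (hcoord l).mul contDiff_const
  have hLψ : Lgen b σ (fun y => ∑ i, Φ y i * ξ i) x = -∑ i, H x i * ξ i := by
    simp [Lgen_sum_mul_const b σ hcoord, hcell]
  rw [calGIntegrand_mulVec_dotProduct, Gamma2_mulVec_dotProduct σ H G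
    (fun l => (hcoord l).differentiable two_ne_zero x), Lgen_sq b σ hψ, hLψ]
  simp only [add_sq, sum_add_distrib, mul_assoc, ← mul_sum]
  ring

end CellProblem

section MatrixIntegral

variable {X n p : Type*} [MeasurableSpace X] [Fintype n] [Fintype p] {μ : Measure X}
  {A : X → Matrix n p ℝ}

lemma integrable_mulVec_dotProduct (hA : ∀ i j, Integrable (fun x => A x i j) μ)
    (ξ : p → ℝ) (η : n → ℝ) : Integrable (fun x => A x *ᵥ ξ ⬝ᵥ η) μ :=
  integrable_finsetSum _ fun i _ =>
    (integrable_finsetSum _ fun j _ => (hA i j).mul_const _).mul_const _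

lemma integral_mulVec_dotProduct (hA : ∀ i j, Integrable (fun x => A x i j) μ)
    (ξ : p → ℝ) (η : n → ℝ) :
    ∫ x, A x *ᵥ ξ ⬝ᵥ η ∂μ = (of fun i j => ∫ x, A x i j ∂μ) *ᵥ ξ ⬝ᵥ η := by
  simp only [dotProduct, mulVec, of_apply]
  rw [integral_finsetSum _ fun i _ =>
    (integrable_finsetSum _ fun j _ => (hA i j).mul_const _).mul_const _]
  refine sum_congr rfl fun i _ => ?_
  rw [integral_mul_const, integral_finsetSum _ fun j _ => (hA i j).mul_const _]
  simp only [integral_mul_const]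

end MatrixIntegral

theorem calG_posSemidef_general {d m ϑ : ℕ}
    (b : EuclideanSpace ℝ (Fin d) → EuclideanSpace ℝ (Fin d))
    (σ : EuclideanSpace ℝ (Fin d) → Matrix (Fin d) (Fin m) ℝ)
    (H : EuclideanSpace ℝ (Fin d) → EuclideanSpace ℝ (Fin ϑ))
    (G : EuclideanSpace ℝ (Fin d) → Matrix (Fin ϑ) (Fin m) ℝ)
    (Φ : EuclideanSpace ℝ (Fin d) → EuclideanSpace ℝ (Fin ϑ))
    (hΦ : ContDiff ℝ 2 Φ)
    (hcell : ∀ (i : Fin ϑ) (x : EuclideanSpace ℝ (Fin d)),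
      Lgen b σ (fun y => Φ y i) x = -(H x i))
    (μ : Measure (EuclideanSpace ℝ (Fin d)))
    (hintG : ∀ i j : Fin ϑ, Integrable (fun x => (G x * (G x)ᵀ) i j) μ)
    (hintΓ : ∀ i j : Fin ϑ, Integrable (fun x => (Gamma2 σ H G Φ x) i j) μ)
    (hintL : ∀ ξ : Fin ϑ → ℝ, Integrable
      (fun x => Lgen b σ (fun y => (∑ i, Φ y i * ξ i) ^ 2) x) μ)
    (hzero : ∀ ξ : Fin ϑ → ℝ,
      ∫ x, Lgen b σ (fun y => (∑ i, Φ y i * ξ i) ^ 2) x ∂μ = 0) :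
    (calG σ H G Φ μ)ᵀ = calG σ H G Φ μ ∧
    ∀ ξ : Fin ϑ → ℝ,
      (∑ i, (∑ j, calG σ H G Φ μ i j * ξ j) * ξ i)
        = ∫ x, ∑ k, ((∑ i, G x i k * ξ i)
            + ∑ j, σ x j k * pd (fun z => ∑ i, Φ z i * ξ i) x j) ^ 2 ∂μ ∧
      0 ≤ ∑ i, (∑ j, calG σ H G Φ μ i j * ξ j) * ξ i := by
  refine ⟨calG_transpose σ H G μ, fun ξ => ?_⟩
  have hint : ∀ i j, Integrable (fun x => calGIntegrand σ H G Φ x i j) μ := fun i j =>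
    (hintG i j).add (((hintΓ i j).add (hintΓ j i)).const_mul 2⁻¹)
  have hquad : calG σ H G Φ μ *ᵥ ξ ⬝ᵥ ξ
      = ∫ x, ∑ k, ((∑ i, G x i k * ξ i)
          + ∑ j, σ x j k * pd (fun z => ∑ i, Φ z i * ξ i) x j) ^ 2 ∂μ := by
    simp only [sum_sq_eq_calGIntegrand_add_Lgen_sq σ H G b hΦ (hcell · _)]
    rw [integral_add (integrable_mulVec_dotProduct hint ξ ξ) ((hintL ξ).div_const 2),
      integral_div, hzero, zero_div, add_zero, integral_mulVec_dotProduct hint,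
      calG_eq_integral_calGIntegrand]
  change calG σ H G Φ μ *ᵥ ξ ⬝ᵥ ξ = _ ∧ 0 ≤ calG σ H G Φ μ *ᵥ ξ ⬝ᵥ ξ
  exact ⟨hquad, hquad ▸ integral_nonneg fun x => sum_nonneg fun k _ => sq_nonneg _⟩

/-- The effective diffusion matrix `𝒢` is symmetric and positive semidefinite, with
`⟨𝒢ξ, ξ⟩ = ∫ |Gᵀξ + σᵀ∇⟨Φ, ξ⟩|² dμ`. -/
theorem calG_posSemidef {d m ϑ : ℕ}
    (b : EuclideanSpace ℝ (Fin d) → EuclideanSpace ℝ (Fin d))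
    (σ : EuclideanSpace ℝ (Fin d) → Matrix (Fin d) (Fin m) ℝ)
    (H : EuclideanSpace ℝ (Fin d) → EuclideanSpace ℝ (Fin ϑ))
    (G : EuclideanSpace ℝ (Fin d) → Matrix (Fin ϑ) (Fin m) ℝ)
    (hb : Measurable b) (hσ : ∀ i j, Measurable fun x => σ x i j)
    (hH : Measurable H) (hG : ∀ i j, Measurable fun x => G x i j)
    (Φ : EuclideanSpace ℝ (Fin d) → EuclideanSpace ℝ (Fin ϑ))
    (hΦ : ContDiff ℝ 2 Φ)
    (hcell : ∀ (i : Fin ϑ) (x : EuclideanSpace ℝ (Fin d)),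
      Lgen b σ (fun y => Φ y i) x = -(H x i))
    (μ : Measure (EuclideanSpace ℝ (Fin d))) [IsProbabilityMeasure μ]
    (hintG : ∀ i j : Fin ϑ, Integrable (fun x => (G x * (G x)ᵀ) i j) μ)
    (hintΓ : ∀ i j : Fin ϑ, Integrable (fun x => (Gamma2 σ H G Φ x) i j) μ)
    (hintσ : ∀ ξ : Fin ϑ → ℝ, Integrable
      (fun x => ∑ k, (∑ j, σ x j k * pd (fun z => ∑ i, Φ z i * ξ i) x j) ^ 2) μ)
    (hintL : ∀ ξ : Fin ϑ → ℝ, Integrable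
      (fun x => Lgen b σ (fun y => (∑ i, Φ y i * ξ i) ^ 2) x) μ)
    (hzero : ∀ ξ : Fin ϑ → ℝ,
      ∫ x, Lgen b σ (fun y => (∑ i, Φ y i * ξ i) ^ 2) x ∂μ = 0) :
    (calG σ H G Φ μ)ᵀ = calG σ H G Φ μ ∧
    ∀ ξ : Fin ϑ → ℝ,
      (∑ i, (∑ j, calG σ H G Φ μ i j * ξ j) * ξ i)
        = ∫ x, ∑ k, ((∑ i, G x i k * ξ i)
            + ∑ j, σ x j k * pd (fun z => ∑ i, Φ z i * ξ i) x j) ^ 2 ∂μ ∧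
      0 ≤ ∑ i, (∑ j, calG σ H G Φ μ i j * ξ j) * ξ i :=
  calG_posSemidef_general b σ H G Φ hΦ hcell μ hintG hintΓ hintL hzero
end
end

section
/- Let A be a real d×d matrix and κ₀ > 0 with ⟨Aξ, ξ⟩ ≥ κ₀·|ξ|² for all ξ ∈ ℝ^d, and let B be a real d×d matrix. Then the matrix-valued function s ↦ exp(−s·A)·B·exp(−s·Aᵀ) is Bochner integrable on [0,∞), and the matrix Σ := 2·∫₀^∞ exp(−s·A)·B·exp(−s·Aᵀ) ds satisfies the Lyapunov equation A·Σ + Σ·Aᵀ = 2·B. Moreover, if B is symmetric then Σ is symmetric, and if B is positive semidefinite then Σ is positive semidefinite. -/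
/-!
If `⟪Aξ, ξ⟫ ≥ κ₀‖ξ‖²`, then `d/ds ‖e^{-sA}ξ‖² = -2⟪A e^{-sA}ξ, e^{-sA}ξ⟫ ≤ -2κ₀‖e^{-sA}ξ‖²`, so
`‖e^{-sA}‖ ≤ e^{-κ₀ s}` in the L2 operator norm, and likewise for `Aᵀ`. Hence
`F(s) = e^{-sA} B e^{-sAᵀ}` decays like `e^{-2κ₀ s}`; as `F' = -(AF + FAᵀ)`, integrating over
`(0, ∞)` gives `A (∫F) + (∫F) Aᵀ = F(0) = B`. Each `F(s)` has the form `M B Mᵀ`, so symmetry and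
positive semidefiniteness of `B` pass to every `F(s)` and then to the integral.
-/

open Matrix MeasureTheory
open NormedSpace Filter Topology
open scoped RealInnerProductSpace Matrix.Norms.L2Operator

section ExpDerivative

variable {𝔸 : Type*} [NormedRing 𝔸] [NormedAlgebra ℝ 𝔸] [CompleteSpace 𝔸]

theorem hasDerivAt_exp_neg_smul (a : 𝔸) (t : ℝ) :
    HasDerivAt (fun s : ℝ => exp (-(s • a))) (-(exp (-(t • a)) * a)) t := by
  simpa only [smul_neg, mul_neg] using hasDerivAt_exp_smul_const (-a) t

theorem hasDerivAt_exp_neg_smul' (a : 𝔸) (t : ℝ) :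
    HasDerivAt (fun s : ℝ => exp (-(s • a))) (-(a * exp (-(t • a)))) t := by
  simpa only [smul_neg, neg_mul] using hasDerivAt_exp_smul_const' (-a) t

end ExpDerivative

section Coercive

variable {E : Type*} [NormedAddCommGroup E] [InnerProductSpace ℝ E] [CompleteSpace E]
  {T : E →L[ℝ] E} {κ : ℝ}

theorem sq_norm_exp_neg_smul_apply_le_of_coercive (hT : ∀ v, κ * ‖v‖ ^ 2 ≤ ⟪T v, v⟫) (v : E)
    {s : ℝ} (hs : 0 ≤ s) : ‖exp (-(s • T)) v‖ ^ 2 ≤ Real.exp (-(2 * κ * s)) * ‖v‖ ^ 2 := by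
  set x : ℝ → E := fun t => exp (-(t • T)) v
  have hx (t : ℝ) : HasDerivAt x (-T (x t)) t :=
    (hasDerivAt_exp_neg_smul' T t).clm_apply (hasDerivAt_const t v) |>.congr_deriv (by simp [x])
  -- `t ↦ e^{2κt} ‖x t‖²` is antitone, since `d/dt ‖x t‖² = -2⟪T x, x⟫ ≤ -2κ‖x‖²`.
  set ψ : ℝ → ℝ := fun t => Real.exp (2 * κ * t) * ‖x t‖ ^ 2
  have hψ (t : ℝ) :
      HasDerivAt ψ (Real.exp (2 * κ * t) * (2 * κ * ‖x t‖ ^ 2 - 2 * ⟪T (x t), x t⟫)) t := by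
    refine ((((hasDerivAt_id t).const_mul (2 * κ)).exp).fun_mul (hx t).norm_sq).congr_deriv ?_
    rw [inner_neg_right, real_inner_comm, id]
    ring
  have hanti : Antitone ψ := antitone_of_deriv_nonpos (fun t => (hψ t).differentiableAt)
    fun t => (hψ t).deriv ▸ mul_nonpos_of_nonneg_of_nonpos (Real.exp_pos _).le
      (by linarith [hT (x t)])
  have h := hanti hs
  simp only [ψ, x, mul_zero, Real.exp_zero, one_mul, zero_smul, neg_zero, exp_zero,
    one_apply_eq_self] at h
  rw [Real.exp_neg, inv_mul_eq_div, le_div_iff₀ (Real.exp_pos _), mul_comm]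
  exact h

theorem norm_exp_neg_smul_le_of_coercive (hT : ∀ v, κ * ‖v‖ ^ 2 ≤ ⟪T v, v⟫) {s : ℝ}
    (hs : 0 ≤ s) : ‖exp (-(s • T))‖ ≤ Real.exp (-(κ * s)) := by
  refine ContinuousLinearMap.opNorm_le_bound _ (Real.exp_pos _).le fun v => ?_
  refine (sq_le_sq₀ (norm_nonneg _) (by positivity)).mp ?_
  calc ‖exp (-(s • T)) v‖ ^ 2 ≤ Real.exp (-(2 * κ * s)) * ‖v‖ ^ 2 :=
        sq_norm_exp_neg_smul_apply_le_of_coercive hT v hs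
    _ = (Real.exp (-(κ * s)) * ‖v‖) ^ 2 := by
        rw [mul_pow, ← Real.exp_nat_mul]; ring_nf

end Coercive

section Sylvester

variable {𝔸 : Type*} [NormedRing 𝔸] [NormedAlgebra ℝ 𝔸] [CompleteSpace 𝔸]

noncomputable def sylvesterIntegrand (a b c : 𝔸) (s : ℝ) : 𝔸 :=
  exp (-(s • a)) * c * exp (-(s • b))

variable (a b c : 𝔸)

omit [CompleteSpace 𝔸] in
theorem sylvesterIntegrand_zero : sylvesterIntegrand a b c 0 = c := by
  simp [sylvesterIntegrand]

theorem hasDerivAt_sylvesterIntegrand (t : ℝ) :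
    HasDerivAt (sylvesterIntegrand a b c)
      (-(a * sylvesterIntegrand a b c t + sylvesterIntegrand a b c t * b)) t := by
  refine (((hasDerivAt_exp_neg_smul' a t).mul_const c).mul
    (hasDerivAt_exp_neg_smul b t)).congr_deriv ?_
  simp only [sylvesterIntegrand]
  noncomm_ring

theorem continuous_sylvesterIntegrand : Continuous (sylvesterIntegrand a b c) :=
  continuous_iff_continuousAt.mpr fun t => (hasDerivAt_sylvesterIntegrand a b c t).continuousAt

variable {a b} {κ : ℝ} (ha : ∀ s, 0 ≤ s → ‖exp (-(s • a))‖ ≤ Real.exp (-(κ * s)))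
  (hb : ∀ s, 0 ≤ s → ‖exp (-(s • b))‖ ≤ Real.exp (-(κ * s)))
include ha hb

omit [CompleteSpace 𝔸] in
theorem norm_sylvesterIntegrand_le {s : ℝ} (hs : 0 ≤ s) :
    ‖sylvesterIntegrand a b c s‖ ≤ ‖c‖ * Real.exp (-(2 * κ) * s) :=
  calc ‖sylvesterIntegrand a b c s‖ ≤ ‖exp (-(s • a))‖ * ‖c‖ * ‖exp (-(s • b))‖ :=
        norm_mul₃_le
    _ ≤ Real.exp (-(κ * s)) * ‖c‖ * Real.exp (-(κ * s)) := by
        gcongr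
        exacts [ha s hs, hb s hs]
    _ = ‖c‖ * Real.exp (-(2 * κ) * s) := by
        rw [mul_right_comm, mul_comm, ← Real.exp_add]; ring_nf

theorem integrableOn_sylvesterIntegrand (hκ : 0 < κ) :
    IntegrableOn (sylvesterIntegrand a b c) (Set.Ioi 0) := by
  refine Integrable.mono' ((exp_neg_integrableOn_Ioi 0 (b := 2 * κ) (by positivity)).const_mul ‖c‖)
    (continuous_sylvesterIntegrand a b c).aestronglyMeasurable.restrict ?_
  filter_upwards [ae_restrict_mem measurableSet_Ioi] with s hs
  exact norm_sylvesterIntegrand_le c ha hb (le_of_lt hs)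

omit [CompleteSpace 𝔸] in
theorem tendsto_sylvesterIntegrand_atTop (hκ : 0 < κ) :
    Tendsto (sylvesterIntegrand a b c) atTop (𝓝 0) := by
  have hdecay : Tendsto (fun s => ‖c‖ * Real.exp (-(2 * κ) * s)) atTop (𝓝 (‖c‖ * 0)) :=
    (Real.tendsto_exp_atBot.comp
      (tendsto_id.const_mul_atTop_of_neg (neg_neg_of_pos (by positivity)))).const_mul ‖c‖
  refine squeeze_zero_norm' ?_ (by rwa [mul_zero] at hdecay)
  filter_upwards [eventually_ge_atTop 0] with s hs
  exact norm_sylvesterIntegrand_le c ha hb hs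

theorem sylvester_integral_eq (hκ : 0 < κ) :
    a * (∫ s in Set.Ioi 0, sylvesterIntegrand a b c s) +
      (∫ s in Set.Ioi 0, sylvesterIntegrand a b c s) * b = c := by
  have hint := integrableOn_sylvesterIntegrand c ha hb hκ
  have h := integral_Ioi_of_hasDerivAt_of_tendsto'
    (fun t _ => hasDerivAt_sylvesterIntegrand a b c t)
    ((hint.const_mul a).add (hint.mul_const b)).neg
    (tendsto_sylvesterIntegrand_atTop c ha hb hκ)
  rwa [integral_neg, integral_add (hint.const_mul a) (hint.mul_const b),
    integral_const_mul_of_integrable hint, integral_mul_const_of_integrable hint,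
    sylvesterIntegrand_zero, zero_sub, neg_inj] at h

end Sylvester

theorem LinearMap.integral_comp_comm_of_finiteDimensional {X E F : Type*} [MeasurableSpace X]
    {μ : Measure X} [NormedAddCommGroup E] [NormedSpace ℝ E] [FiniteDimensional ℝ E]
    [NormedAddCommGroup F] [NormedSpace ℝ F] [CompleteSpace F] (L : E →ₗ[ℝ] F) {φ : X → E}
    (hφ : Integrable φ μ) :
    ∫ x, L (φ x) ∂μ = L (∫ x, φ x ∂μ) :=
  L.toContinuousLinearMap.integral_comp_comm hφ

theorem Matrix.mul_mul_transpose_mulVec_dotProduct {R m n : Type*} [CommRing R] [Fintype m]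
    [Fintype n] (M : Matrix n m R) (B : Matrix m m R) (ξ : n → R) :
    ((M * B * Mᵀ) *ᵥ ξ) ⬝ᵥ ξ = (B *ᵥ (Mᵀ *ᵥ ξ)) ⬝ᵥ (Mᵀ *ᵥ ξ) := by
  rw [← mulVec_mulVec, ← mulVec_mulVec, dotProduct_comm, dotProduct_mulVec, ← mulVec_transpose,
    dotProduct_comm]

section MatrixIntegral

variable {X m n : Type*} [MeasurableSpace X] {μ : Measure X} [Fintype m] [Fintype n]
  [DecidableEq n] {F : X → Matrix m n ℝ}

theorem MeasureTheory.Integrable.matrix_apply (hF : Integrable F μ) (i : m) (j : n) :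
    Integrable (fun x => F x i j) μ :=
  (entryLinearMap ℝ ℝ i j).toContinuousLinearMap.integrable_comp hF

theorem Matrix.integral_apply (hF : Integrable F μ) (i : m) (j : n) :
    (∫ x, F x ∂μ) i j = ∫ x, F x i j ∂μ :=
  ((entryLinearMap ℝ ℝ i j).integral_comp_comm_of_finiteDimensional hF).symm

theorem Matrix.integral_mulVec_dotProduct {F : X → Matrix n n ℝ} (hF : Integrable F μ)
    (ξ : n → ℝ) : ((∫ x, F x ∂μ) *ᵥ ξ) ⬝ᵥ ξ = ∫ x, (F x *ᵥ ξ) ⬝ᵥ ξ ∂μ := by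
  let L : Matrix n n ℝ →ₗ[ℝ] ℝ :=
    { toFun := fun M => (M *ᵥ ξ) ⬝ᵥ ξ
      map_add' := fun M N => by rw [add_mulVec, add_dotProduct]
      map_smul' := fun c M => by rw [smul_mulVec, smul_dotProduct]; rfl }
  exact (L.integral_comp_comm_of_finiteDimensional hF).symm

end MatrixIntegral

section MatrixExp

variable {n : Type*} [Fintype n] [DecidableEq n]

theorem Matrix.l2_opNorm_exp_neg_smul_le_of_coercive {A : Matrix n n ℝ} {κ : ℝ}
    (hA : ∀ ξ : EuclideanSpace ℝ n, κ * ‖ξ‖ ^ 2 ≤ ∑ i, (∑ j, A i j * ξ j) * ξ i)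
    {s : ℝ} (hs : 0 ≤ s) : ‖exp (-(s • A))‖ ≤ Real.exp (-(κ * s)) := by
  have hcont : Continuous (toEuclideanCLM (n := n) (𝕜 := ℝ)) :=
    AddMonoidHomClass.continuous_of_bound _ 1 fun M => by rw [one_mul]; rfl
  rw [cstar_norm_def, map_exp_of_mem_ball (𝕂 := ℝ) _ hcont _
    ((expSeries_radius_eq_top ℝ (Matrix n n ℝ)).symm ▸ edist_lt_top _ _), map_neg, map_smul]
  refine norm_exp_neg_smul_le_of_coercive (fun ξ => (hA ξ).trans_eq ?_) hs
  simp [PiLp.inner_apply, mulVec, dotProduct, mul_comm]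

theorem Matrix.exp_neg_smul_transpose (A : Matrix n n ℝ) (s : ℝ) :
    exp (-(s • Aᵀ)) = (exp (-(s • A)))ᵀ := by
  rw [← transpose_smul, ← transpose_neg, exp_transpose]

theorem Matrix.l2_opNorm_exp_neg_smul_transpose (A : Matrix n n ℝ) (s : ℝ) :
    ‖exp (-(s • Aᵀ))‖ = ‖exp (-(s • A))‖ := by
  rw [exp_neg_smul_transpose, ← conjTranspose_eq_transpose_of_trivial, l2_opNorm_conjTranspose]

theorem Matrix.transpose_sylvesterIntegrand (A B : Matrix n n ℝ) (s : ℝ) :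
    (sylvesterIntegrand A Aᵀ B s)ᵀ = sylvesterIntegrand A Aᵀ Bᵀ s := by
  simp only [sylvesterIntegrand, exp_neg_smul_transpose, transpose_mul, transpose_transpose,
    Matrix.mul_assoc]

end MatrixExp

/-- Solution of the Lyapunov equation `AΣ + ΣAᵀ = 2B` by the integral
`Σ = 2∫₀^∞ exp(−sA) B exp(−sAᵀ) ds` (entrywise), for a coercive matrix `A`:
integrability, the Lyapunov identity, and preservation of symmetry and
positive semidefiniteness. -/
theorem lyapunov_integral_solution {d : ℕ}
    (A B : Matrix (Fin d) (Fin d) ℝ) (κ₀ : ℝ) (hκ₀ : 0 < κ₀)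
    (hA : ∀ ξ : EuclideanSpace ℝ (Fin d),
      κ₀ * ‖ξ‖ ^ 2 ≤ ∑ i, (∑ j, A i j * ξ j) * ξ i) :
    (∀ i j : Fin d, IntegrableOn
      (fun s : ℝ =>
        (NormedSpace.exp (-(s • A)) * B * NormedSpace.exp (-(s • Aᵀ))) i j)
      (Set.Ioi 0)) ∧
    ∀ S : Matrix (Fin d) (Fin d) ℝ,
      S = Matrix.of (fun i j => 2 * ∫ s in Set.Ioi (0 : ℝ),
          (NormedSpace.exp (-(s • A)) * B * NormedSpace.exp (-(s • Aᵀ))) i j) →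
      (A * S + S * Aᵀ = (2 : ℝ) • B) ∧
      (Bᵀ = B → Sᵀ = S) ∧
      (Bᵀ = B → (∀ ξ : Fin d → ℝ, 0 ≤ ∑ i, (∑ j, B i j * ξ j) * ξ i) →
        ∀ ξ : Fin d → ℝ, 0 ≤ ∑ i, (∑ j, S i j * ξ j) * ξ i) := by
  have hdecay (s : ℝ) (hs : 0 ≤ s) : ‖exp (-(s • A))‖ ≤ Real.exp (-(κ₀ * s)) :=
    l2_opNorm_exp_neg_smul_le_of_coercive hA hs
  have hdecayT (s : ℝ) (hs : 0 ≤ s) : ‖exp (-(s • Aᵀ))‖ ≤ Real.exp (-(κ₀ * s)) :=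
    (l2_opNorm_exp_neg_smul_transpose A s).trans_le (hdecay s hs)
  have hint := integrableOn_sylvesterIntegrand B hdecay hdecayT hκ₀
  refine ⟨hint.matrix_apply, fun S hS => ?_⟩
  obtain rfl : S = (2 : ℝ) • ∫ s in Set.Ioi 0, sylvesterIntegrand A Aᵀ B s := by
    ext i j
    rw [hS, Matrix.smul_apply, integral_apply hint]
    rfl
  refine ⟨?_, fun hB => ?_, fun _ hBpsd ξ => ?_⟩
  · rw [mul_smul_comm, smul_mul_assoc, ← smul_add, sylvester_integral_eq B hdecay hdecayT hκ₀]
  · ext i j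
    simp only [transpose_apply, Matrix.smul_apply, integral_apply hint]
    simp_rw [← transpose_apply (sylvesterIntegrand A Aᵀ B _) j i, transpose_sylvesterIntegrand, hB]
  · change 0 ≤ (_ *ᵥ ξ) ⬝ᵥ ξ
    rw [smul_mulVec, smul_dotProduct, integral_mulVec_dotProduct hint]
    refine smul_nonneg zero_le_two (integral_nonneg fun s => ?_)
    rw [sylvesterIntegrand, exp_neg_smul_transpose, mul_mul_transpose_mulVec_dotProduct]
    exact hBpsd _
end

section
/- Let E be a measurable space, (κ_t)_{t≥0} a family of Markov kernels from E to E, and for bounded measurable g : E → ℝ let T_t g(x) := ∫_E g(z) κ_t(x, dz). Let μ be a probability measure on E such that ∫_E T_t g dμ = ∫_E g dμ for all bounded measurable g and all t ≥ 0, and suppose there are constants C, κ > 0 such that for all bounded measurable g, all t ≥ 0 and all x ∈ E, |T_t g(x) − ∫_E g dμ| ≤ C·e^{−κt}·‖g‖_∞, where ‖g‖_∞ := sup_{x∈E} |g(x)|. Then for every bounded measurable f : E → ℝ with ∫_E f dμ = 0 and all s₁, s₂, s₃ ≥ 0, | ∫_E f·T_{s₁}( f·T_{s₂}( f·T_{s₃}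 f ) ) dμ | ≤ C²·e^{−κ s₁}·e^{−κ s₃}·‖f‖_∞⁴. -/
open MeasureTheory ProbabilityTheory

section aux

variable {E : Type*} [MeasurableSpace E]

lemma kernel_integral_measurable (κ : Kernel E E) [IsSFiniteKernel κ] {g : E → ℝ}
    (hg : Measurable g) : Measurable fun x => ∫ z, g z ∂(κ x) := by
  have := (hg.stronglyMeasurable.comp_measurable
    (measurable_snd : Measurable fun p : E × E => p.2)).integral_kernel_prod_right' (κ := κ)
  exact this.measurable

lemma kernel_integral_bound (κ : Kernel E E) [IsMarkovKernel κ] {g : E → ℝ} {K : ℝ}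
    (hK : ∀ x, |g x| ≤ K) (x : E) : |∫ z, g z ∂(κ x)| ≤ K := by
  have := norm_integral_le_of_norm_le_const (μ := κ x) (f := g) (C := K)
    (Filter.Eventually.of_forall fun z => by simpa using hK z)
  simpa using this

lemma integral_abs_bound {μ : Measure E} [IsProbabilityMeasure μ] {g : E → ℝ} {K : ℝ}
    (hK : ∀ x, |g x| ≤ K) : |∫ x, g x ∂μ| ≤ K := by
  have := norm_integral_le_of_norm_le_const (μ := μ) (f := g) (C := K)
    (Filter.Eventually.of_forall fun z => by simpa using hK z)
  simpa using this

end aux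

/-- Four-point correlation bound for an exponentially ergodic Markov semigroup:
if `T_t` is the semigroup of a family of Markov kernels with invariant probability
measure `μ` satisfying `|T_t g − μ(g)| ≤ C e^{−κ t} ‖g‖_∞` for bounded measurable `g`,
then for every bounded measurable centered `f`,
`|∫ f · T_{s₁}(f · T_{s₂}(f · T_{s₃} f)) dμ| ≤ C² e^{−κ s₁} e^{−κ s₃} ‖f‖_∞⁴`. -/
theorem four_point_correlation_bound {E : Type*} [MeasurableSpace E]
    (κ : ℝ → Kernel E E) (hκ : ∀ t, IsMarkovKernel (κ t))
    (T : ℝ → (E → ℝ) → E → ℝ)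
    (hT : ∀ t g x, T t g x = ∫ z, g z ∂(κ t x))
    (μ : Measure E) [IsProbabilityMeasure μ]
    (C κc : ℝ) (hC : 0 < C) (hκc : 0 < κc)
    (hinv : ∀ g : E → ℝ, Measurable g → (∃ K, ∀ x, |g x| ≤ K) → ∀ t : ℝ, 0 ≤ t →
      ∫ x, T t g x ∂μ = ∫ x, g x ∂μ)
    (hmix : ∀ g : E → ℝ, Measurable g → (∃ K, ∀ x, |g x| ≤ K) → ∀ t : ℝ, 0 ≤ t →
      ∀ x : E, |T t g x - ∫ z, g z ∂μ| ≤ C * Real.exp (-κc * t) * (⨆ x', |g x'|))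
    (f : E → ℝ) (hf : Measurable f) (hfb : ∃ K, ∀ x, |f x| ≤ K)
    (hf0 : ∫ x, f x ∂μ = 0) :
    ∀ s₁ s₂ s₃ : ℝ, 0 ≤ s₁ → 0 ≤ s₂ → 0 ≤ s₃ →
      |∫ x, f x * T s₁ (fun z => f z * T s₂ (fun w => f w * T s₃ f w) z) x ∂μ|
        ≤ C ^ 2 * Real.exp (-κc * s₁) * Real.exp (-κc * s₃) * (⨆ x, |f x|) ^ 4 := by
  intro s₁ s₂ s₃ hs₁ hs₂ hs₃
  haveI := hκ s₁; haveI := hκ s₂; haveI := hκ s₃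
  obtain ⟨K, hK⟩ := hfb
  set M : ℝ := ⨆ x, |f x| with hMdef
  have hbdd : BddAbove (Set.range fun x => |f x|) := ⟨K, by rintro y ⟨x, rfl⟩; exact hK x⟩
  have hMb : ∀ x, |f x| ≤ M := fun x => le_ciSup hbdd x
  have hM0 : 0 ≤ M := by
    rcases isEmpty_or_nonempty E with h | h
    · simp [hMdef, Real.iSup_of_isEmpty]
    · exact le_trans (abs_nonneg _) (hMb (Classical.arbitrary E))
  -- inner function g₃ = T s₃ f
  have hg₃m : Measurable (T s₃ f) := by
    have := kernel_integral_measurable (κ s₃) hf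
    simpa [funext fun x => hT s₃ f x] using this
  have hg₃b : ∀ x, |T s₃ f x| ≤ C * Real.exp (-κc * s₃) * M := by
    intro x
    have := hmix f hf ⟨K, hK⟩ s₃ hs₃ x
    simpa [hf0] using this
  -- u w = f w * T s₃ f w
  set u : E → ℝ := fun w => f w * T s₃ f w with hudef
  have hum : Measurable u := hf.mul hg₃m
  have hub : ∀ w, |u w| ≤ M * (C * Real.exp (-κc * s₃) * M) := fun w => by
    rw [hudef]; simp only [abs_mul]
    exact mul_le_mul (hMb w) (hg₃b w) (abs_nonneg _)
      hM0
  -- T s₂ u bounded by same constant (contraction)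
  have hTum : Measurable (T s₂ u) := by
    have := kernel_integral_measurable (κ s₂) hum
    simpa [funext fun x => hT s₂ u x] using this
  have hTub : ∀ z, |T s₂ u z| ≤ M * (C * Real.exp (-κc * s₃) * M) := by
    intro z
    rw [hT]
    exact kernel_integral_bound (κ s₂) hub z
  -- h z = f z * T s₂ u z
  set h : E → ℝ := fun z => f z * T s₂ u z with hhdef
  have hhm : Measurable h := hf.mul hTum
  have hhb : ∀ z, |h z| ≤ M * (M * (C * Real.exp (-κc * s₃) * M)) := fun z => by
    rw [hhdef]; simp only [abs_mul]
    exact mul_le_mul (hMb z) (hTub z) (abs_nonneg _) hM0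
  set B : ℝ := M * (M * (C * Real.exp (-κc * s₃) * M)) with hBdef
  have hB0' : 0 ≤ B := by rw [hBdef]; positivity
  -- sup of |h| ≤ B
  have hsuph : (⨆ z, |h z|) ≤ B := by
    rcases isEmpty_or_nonempty E with hE | hE
    · rw [Real.iSup_of_isEmpty]; exact hB0'
    · exact ciSup_le hhb
  -- main estimate
  set c : ℝ := ∫ z, h z ∂μ with hcdef
  have hTh : ∀ x, |T s₁ h x - c| ≤ C * Real.exp (-κc * s₁) * B := by
    intro x
    refine le_trans (hmix h hhm ⟨B, hhb⟩ s₁ hs₁ x) ?_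
    have : C * Real.exp (-κc * s₁) > 0 := by positivity
    exact mul_le_mul_of_nonneg_left hsuph (le_of_lt this)
  have hThm : Measurable (T s₁ h) := by
    have := kernel_integral_measurable (κ s₁) hhm
    simpa [funext fun x => hT s₁ h x] using this
  have hThb : ∀ x, |T s₁ h x| ≤ B := by
    intro x; rw [hT]; exact kernel_integral_bound (κ s₁) hhb x
  -- rewrite integral using centering
  have hcb : |c| ≤ B := integral_abs_bound hhb
  have hint1 : Integrable (fun x => f x * T s₁ h x) μ := by
    refine (integrable_const (M * B)).mono' ((hf.mul hThm).aestronglyMeasurable)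
      (Filter.Eventually.of_forall fun x => ?_)
    simp only [Real.norm_eq_abs, abs_mul]
    exact mul_le_mul (hMb x) (hThb x) (abs_nonneg _) hM0
  have hint2 : Integrable (fun x => f x * (T s₁ h x - c)) μ := by
    refine (integrable_const (M * (B + B))).mono' ((hf.mul (hThm.sub measurable_const)).aestronglyMeasurable)
      (Filter.Eventually.of_forall fun x => ?_)
    simp only [Real.norm_eq_abs, abs_mul]
    refine mul_le_mul (hMb x) (le_trans (abs_sub _ _) (add_le_add (hThb x) hcb)) (abs_nonneg _) hM0
  have hintf : Integrable f μ := by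
    refine (integrable_const M).mono' hf.aestronglyMeasurable
      (Filter.Eventually.of_forall fun x => by simpa using hMb x)
  have key : ∫ x, f x * T s₁ h x ∂μ = ∫ x, f x * (T s₁ h x - c) ∂μ := by
    have : ∫ x, f x * (T s₁ h x - c) ∂μ
        = ∫ x, f x * T s₁ h x ∂μ - ∫ x, f x * c ∂μ := by
      simp_rw [mul_sub]
      exact integral_sub hint1 (hintf.mul_const c)
    rw [this, integral_mul_const, hf0]; ring
  have hbound : |∫ x, f x * T s₁ h x ∂μ| ≤ M * (C * Real.exp (-κc * s₁) * B) := by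
    rw [key]
    refine integral_abs_bound fun x => ?_
    rw [abs_mul]
    exact mul_le_mul (hMb x) (hTh x) (abs_nonneg _) hM0
  calc |∫ x, f x * T s₁ (fun z => f z * T s₂ (fun w => f w * T s₃ f w) z) x ∂μ|
      = |∫ x, f x * T s₁ h x ∂μ| := rfl
    _ ≤ M * (C * Real.exp (-κc * s₁) * B) := hbound
    _ = C ^ 2 * Real.exp (-κc * s₁) * Real.exp (-κc * s₃) * M ^ 4 := by
        rw [hBdef]; ring
end

section
/- Let (Ω, 𝓕, P) be a probability space, let S₀ < S₁ be real numbers, and let g : [S₀, S₁] × Ω → ℝ be jointly measurable and bounded. Suppose there are constants M, κ > 0 such that for all r₁, r₂, r₃, r₄ with S₀ ≤ r₁ ≤ r₂ ≤ r₃ ≤ r₄ ≤ S₁, |E[g(r₁,·)·g(r₂,·)·g(r₃,·)·g(r₄,·)]| ≤ M·e^{−κ(r₂−r₁)}·e^{−κ(r₄−r₃)}. Then E[ ( ∫_{S₀}^{S₁} g(u,·) du )⁴ ] ≤ 24·M·κ^{−2}·(S₁ − S₀)². -/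
/-!
Expand the fourth power of the time integral as a fourfold integral over the cube and exchange
it with the expectation. The four-point correlation is symmetric in its arguments, so sorting
them shows that it is bounded everywhere by `M` times the sum, over the three pairings of the
four times, of products of the kernel `e^{-κ|a-b|}`. Each pairing integrates to
`(∫∫ e^{-κ|a-b|})² ≤ (2(S₁-S₀)/κ)²`, which gives `E[(∫ g)⁴] ≤ 12 M κ⁻² (S₁-S₀)²`.
-/

open MeasureTheory

theorem forall_of_forall_sorted₄ {α : Type*} [LinearOrder α] {p : α → α → α → α → Prop}
    (swap₁₂ : ∀ {a b c d}, p a b c d → p b a c d) (swap₂₃ : ∀ {a b c d}, p a b c d → p a c b d)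
    (swap₃₄ : ∀ {a b c d}, p a b c d → p a b d c)
    (sorted : ∀ {a b c d}, a ≤ b → b ≤ c → c ≤ d → p a b c d) (a b c d : α) : p a b c d := by
  have sorted₃ : ∀ {a b c d}, a ≤ b → b ≤ c → p a b c d := by
    intro a b c d hab hbc
    rcases le_total c d with hcd | hdc
    · exact sorted hab hbc hcd
    rcases le_total b d with hbd | hdb
    · exact swap₃₄ (sorted hab hbd hdc)
    rcases le_total a d with had | hda
    · exact swap₃₄ (swap₂₃ (sorted had hdb hbc))
    · exact swap₃₄ (swap₂₃ (swap₁₂ (sorted hda hab hbc)))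
  have sorted₂ : ∀ {a b c d}, a ≤ b → p a b c d := by
    intro a b c d hab
    rcases le_total b c with hbc | hcb
    · exact sorted₃ hab hbc
    rcases le_total a c with hac | hca
    · exact swap₂₃ (sorted₃ hac hcb)
    · exact swap₂₃ (swap₁₂ (sorted₃ hca hab))
  rcases le_total a b with hab | hba
  · exact sorted₂ hab
  · exact swap₁₂ (sorted₂ hba)

def pairingSum {α : Type*} (B : α → α → ℝ) (a b c d : α) : ℝ :=
  B a b * B c d + B a c * B b d + B a d * B b c

theorem abs_integral_mul_four_le_pairingSum {α Ω : Type*} [LinearOrder α] [MeasurableSpace Ω]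
    (P : Measure Ω) (f : α → Ω → ℝ) {B : α → α → ℝ} {M : ℝ} (hM : 0 ≤ M)
    (hB : ∀ a b, 0 ≤ B a b) (hB_comm : ∀ a b, B a b = B b a)
    (hsorted : ∀ {a b c d}, a ≤ b → b ≤ c → c ≤ d →
      |∫ ω, f a ω * f b ω * f c ω * f d ω ∂P| ≤ M * (B a b * B c d))
    (a b c d : α) :
    |∫ ω, f a ω * f b ω * f c ω * f d ω ∂P| ≤ M * pairingSum B a b c d := by
  refine forall_of_forall_sorted₄ (p := fun a b c d =>
      |∫ ω, f a ω * f b ω * f c ω * f d ω ∂P| ≤ M * pairingSum B a b c d) ?_ ?_ ?_ ?_ a b c d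
  rotate_right
  · intro a b c d hab hbc hcd
    exact (hsorted hab hbc hcd).trans <| mul_le_mul_of_nonneg_left
      ((le_add_of_nonneg_right (mul_nonneg (hB a c) (hB b d))).trans
        (le_add_of_nonneg_right (mul_nonneg (hB a d) (hB b c)))) hM
  all_goals
    intro a b c d h
    convert h using 1
    · congr 2; ext ω; ring
    · simp only [pairingSum, hB_comm b a, hB_comm c b, hB_comm d c]; ring

theorem integral_pow_four_eq_integral_prod {α : Type*} [MeasurableSpace α] (ν : Measure α)
    [SFinite ν] (f : α → ℝ) :
    (∫ u, f u ∂ν) ^ 4 = ∫ z, f z.1.1 * f z.1.2 * f z.2.1 * f z.2.2 ∂(ν.prod ν).prod (ν.prod ν) := by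
  have hsq : ∫ p, f p.1 * f p.2 ∂ν.prod ν = (∫ u, f u ∂ν) ^ 2 := by
    rw [integral_prod_mul, sq]
  calc (∫ u, f u ∂ν) ^ 4 = (∫ p, f p.1 * f p.2 ∂ν.prod ν) * ∫ p, f p.1 * f p.2 ∂ν.prod ν := by
        rw [hsq]; ring
    _ = ∫ z, f z.1.1 * f z.1.2 * (f z.2.1 * f z.2.2) ∂(ν.prod ν).prod (ν.prod ν) :=
        (integral_prod_mul (fun p : α × α => f p.1 * f p.2) _).symm
    _ = _ := by simp only [mul_assoc]

theorem integral_pow_four_integral_eq {α Ω : Type*} [MeasurableSpace α] [MeasurableSpace Ω]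
    (P : Measure Ω) [IsFiniteMeasure P] (ν : Measure α) [IsFiniteMeasure ν] {f : α → Ω → ℝ}
    (hf : Measurable (Function.uncurry f)) {C : ℝ} (hC : ∀ u ω, |f u ω| ≤ C) :
    ∫ ω, (∫ u, f u ω ∂ν) ^ 4 ∂P
      = ∫ z, ∫ ω, f z.1.1 ω * f z.1.2 ω * f z.2.1 ω * f z.2.2 ω ∂P ∂(ν.prod ν).prod (ν.prod ν) := by
  simp_rw [integral_pow_four_eq_integral_prod]
  refine integral_integral_swap (Integrable.of_bound (by fun_prop) (C ^ 4) (ae_of_all _ ?_))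
  rintro ⟨ω, z⟩
  have hC₀ : 0 ≤ C := (abs_nonneg _).trans (hC z.1.1 ω)
  simp only [Function.uncurry_apply_pair, norm_mul, Real.norm_eq_abs]
  calc _ ≤ C * C * C * C := by gcongr <;> exact hC _ _
    _ = C ^ 4 := by ring

theorem integrable_mul_comp_of_abs_le {α β : Type*} [MeasurableSpace α] [MeasurableSpace β]
    {μ : Measure β} [IsFiniteMeasure μ] {B : α → α → ℝ} (hB : Measurable (Function.uncurry B))
    {C : ℝ} (hC : ∀ a b, |B a b| ≤ C) {x y x' y' : β → α} (hx : Measurable x) (hy : Measurable y)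
    (hx' : Measurable x') (hy' : Measurable y') :
    Integrable (fun z => B (x z) (y z) * B (x' z) (y' z)) μ := by
  refine Integrable.of_bound (by fun_prop) (C * C) (ae_of_all _ fun z => ?_)
  rw [Real.norm_eq_abs, abs_mul]
  exact mul_le_mul (hC _ _) (hC _ _) (abs_nonneg _) ((abs_nonneg _).trans (hC (x z) (y z)))

theorem integrable_pairingSum {α β : Type*} [MeasurableSpace α] [MeasurableSpace β]
    {μ : Measure β} [IsFiniteMeasure μ] {B : α → α → ℝ} (hB : Measurable (Function.uncurry B))
    {C : ℝ} (hC : ∀ a b, |B a b| ≤ C) {a b c d : β → α} (ha : Measurable a) (hb : Measurable b)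
    (hc : Measurable c) (hd : Measurable d) :
    Integrable (fun z => pairingSum B (a z) (b z) (c z) (d z)) μ :=
  ((integrable_mul_comp_of_abs_le hB hC ha hb hc hd).add
    (integrable_mul_comp_of_abs_le hB hC ha hc hb hd)).add
    (integrable_mul_comp_of_abs_le hB hC ha hd hb hc)

theorem integral_pairingSum {α : Type*} [MeasurableSpace α] (ν : Measure α) [IsFiniteMeasure ν]
    {B : α → α → ℝ} (hB : Measurable (Function.uncurry B)) {C : ℝ} (hC : ∀ a b, |B a b| ≤ C) :
    ∫ z, pairingSum B z.1.1 z.1.2 z.2.1 z.2.2 ∂(ν.prod ν).prod (ν.prod ν)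
      = 3 * (∫ p, B p.1 p.2 ∂ν.prod ν) ^ 2 := by
  set J := ∫ p, B p.1 p.2 ∂ν.prod ν
  set I : α → ℝ := fun a => ∫ b, B a b ∂ν
  have hJ : J = ∫ a, I a ∂ν :=
    integral_prod _ <|
      Integrable.of_bound hB.aestronglyMeasurable C (ae_of_all _ fun p => hC p.1 p.2)
  have hI : ∀ a a', ∫ y, B a y.1 * B a' y.2 ∂ν.prod ν = I a * I a' :=
    fun a a' => integral_prod_mul _ _
  have i₁ := integrable_mul_comp_of_abs_le (μ := (ν.prod ν).prod (ν.prod ν)) hB hC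
    measurable_fst.fst measurable_fst.snd measurable_snd.fst measurable_snd.snd
  have i₂ := integrable_mul_comp_of_abs_le (μ := (ν.prod ν).prod (ν.prod ν)) hB hC
    measurable_fst.fst measurable_snd.fst measurable_fst.snd measurable_snd.snd
  have i₃ := integrable_mul_comp_of_abs_le (μ := (ν.prod ν).prod (ν.prod ν)) hB hC
    measurable_fst.fst measurable_snd.snd measurable_fst.snd measurable_snd.fst
  have h₁ : ∫ z, B z.1.1 z.1.2 * B z.2.1 z.2.2 ∂(ν.prod ν).prod (ν.prod ν) = J ^ 2 := by
    rw [integral_prod_mul (fun p : α × α => B p.1 p.2) (fun p : α × α => B p.1 p.2), sq]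
  have h₂ : ∫ z, B z.1.1 z.2.1 * B z.1.2 z.2.2 ∂(ν.prod ν).prod (ν.prod ν) = J ^ 2 := by
    rw [integral_prod _ i₂]
    simp_rw [hI]
    rw [integral_prod_mul I I, hJ, sq]
  have h₃ : ∫ z, B z.1.1 z.2.2 * B z.1.2 z.2.1 ∂(ν.prod ν).prod (ν.prod ν) = J ^ 2 := by
    rw [integral_prod _ i₃]
    have hI' : ∀ a a', ∫ y, B a y.2 * B a' y.1 ∂ν.prod ν = I a * I a' := fun a a' => by
      rw [mul_comm (I a), ← hI]; simp only [mul_comm]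
    simp_rw [hI']
    rw [integral_prod_mul I I, hJ, sq]
  simp only [pairingSum]
  rw [integral_add (by exact i₁.add i₂) i₃, integral_add i₁ i₂, h₁, h₂, h₃]
  ring

theorem integral_le_of_abs_le_mul_pairingSum {α : Type*} [MeasurableSpace α] (ν : Measure α)
    [IsFiniteMeasure ν] {B : α → α → ℝ} (hB : Measurable (Function.uncurry B)) {C : ℝ}
    (hC : ∀ a b, |B a b| ≤ C) {F : (α × α) × α × α → ℝ} {M : ℝ}
    (hF : ∀ z, |F z| ≤ M * pairingSum B z.1.1 z.1.2 z.2.1 z.2.2) :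
    ∫ z, F z ∂(ν.prod ν).prod (ν.prod ν) ≤ M * (3 * (∫ p, B p.1 p.2 ∂ν.prod ν) ^ 2) := by
  have hint := (integrable_pairingSum (μ := (ν.prod ν).prod (ν.prod ν)) hB hC measurable_fst.fst
    measurable_fst.snd measurable_snd.fst measurable_snd.snd).const_mul M
  calc ∫ z, F z ∂(ν.prod ν).prod (ν.prod ν)
      ≤ ∫ z, M * pairingSum B z.1.1 z.1.2 z.2.1 z.2.2 ∂(ν.prod ν).prod (ν.prod ν) :=
        (Real.le_norm_self _).trans (norm_integral_le_of_norm_le hint (ae_of_all _ hF))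
    _ = M * (3 * (∫ p, B p.1 p.2 ∂ν.prod ν) ^ 2) := by
        rw [integral_const_mul, integral_pairingSum ν hB hC]

noncomputable def expKernel (κ a b : ℝ) : ℝ := Real.exp (-κ * |a - b|)

section expKernel

variable {κ : ℝ}

theorem integrable_exp_neg_mul_abs (hκ : 0 < κ) :
    Integrable fun x : ℝ => Real.exp (-κ * |x|) := by
  rw [← integrableOn_univ, ← Set.Iic_union_Ioi (a := 0)]
  refine IntegrableOn.union ?_ ?_
  · refine (integrableOn_exp_mul_Iic hκ 0).congr_fun (fun x hx => ?_) measurableSet_Iic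
    rw [abs_of_nonpos hx]; ring_nf
  · refine (integrableOn_exp_mul_Ioi (neg_neg_of_pos hκ) 0).congr_fun (fun x hx => ?_)
      measurableSet_Ioi
    rw [abs_of_pos hx]

theorem integral_exp_neg_mul_abs (hκ : 0 < κ) : ∫ x : ℝ, Real.exp (-κ * |x|) = 2 / κ := by
  rw [integral_comp_abs (f := fun x => Real.exp (-κ * x)), integral_exp_mul_Ioi (neg_neg_of_pos hκ)]
  field_simp
  simp

theorem expKernel_pos (κ a b : ℝ) : 0 < expKernel κ a b := Real.exp_pos _

theorem expKernel_comm (κ a b : ℝ) : expKernel κ a b = expKernel κ b a := by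
  rw [expKernel, expKernel, abs_sub_comm]

theorem expKernel_of_le {a b : ℝ} (h : a ≤ b) : expKernel κ a b = Real.exp (-κ * (b - a)) := by
  rw [expKernel, abs_sub_comm, abs_of_nonneg (sub_nonneg.2 h)]

theorem abs_expKernel_le_one (hκ : 0 ≤ κ) (a b : ℝ) : |expKernel κ a b| ≤ 1 := by
  rw [abs_of_pos (expKernel_pos κ a b), expKernel, Real.exp_le_one_iff]
  exact mul_nonpos_of_nonpos_of_nonneg (neg_nonpos.2 hκ) (abs_nonneg _)

theorem continuous_uncurry_expKernel (κ : ℝ) : Continuous (Function.uncurry (expKernel κ)) := by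
  unfold expKernel; fun_prop

theorem integrable_expKernel (hκ : 0 < κ) (a : ℝ) : Integrable (expKernel κ a) :=
  (integrable_exp_neg_mul_abs hκ).comp_sub_left a

theorem integral_expKernel (hκ : 0 < κ) (a : ℝ) : ∫ b, expKernel κ a b = 2 / κ :=
  (integral_sub_left_eq_self (fun x => Real.exp (-κ * |x|)) volume a).trans
    (integral_exp_neg_mul_abs hκ)

theorem setIntegral_expKernel_le (hκ : 0 < κ) (a : ℝ) (s : Set ℝ) :
    ∫ b in s, expKernel κ a b ≤ 2 / κ :=
  (setIntegral_le_integral (integrable_expKernel hκ a)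
    (ae_of_all _ fun b => (expKernel_pos κ a b).le)).trans_eq (integral_expKernel hκ a)

theorem integral_prod_restrict_expKernel_le (hκ : 0 < κ) {s : Set ℝ} (hs : volume s ≠ ⊤) :
    ∫ p, expKernel κ p.1 p.2 ∂(volume.restrict s).prod (volume.restrict s)
      ≤ volume.real s * (2 / κ) := by
  have : IsFiniteMeasure (volume.restrict s) := isFiniteMeasure_restrict.2 hs
  rw [integral_prod (fun p : ℝ × ℝ => expKernel κ p.1 p.2) <| Integrable.of_bound
    (continuous_uncurry_expKernel κ).aestronglyMeasurable 1
    (ae_of_all _ fun p => abs_expKernel_le_one hκ.le p.1 p.2)]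
  calc ∫ a in s, ∫ b in s, expKernel κ a b ≤ ∫ _ in s, 2 / κ :=
        integral_mono_of_nonneg
          (ae_of_all _ fun a => integral_nonneg fun b => (expKernel_pos κ a b).le)
          (integrable_const _) (ae_of_all _ fun a => setIntegral_expKernel_le hκ a s)
    _ = volume.real s * (2 / κ) := by simp

end expKernel

theorem measurable_uncurry_indicator {α Ω E : Type*} [MeasurableSpace α] [MeasurableSpace Ω]
    [MeasurableSpace E] [Zero E] {s : Set α} (hs : MeasurableSet s) {g : α → Ω → E}
    (hg : Measurable (Function.uncurry g)) : Measurable (Function.uncurry (s.indicator g)) := by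
  have : Function.uncurry (s.indicator g) = (s ×ˢ Set.univ).indicator (Function.uncurry g) := by
    funext p
    by_cases hu : p.1 ∈ s <;> simp [Function.uncurry, hu]
  rw [this]
  exact hg.indicator (hs.prod MeasurableSet.univ)

theorem abs_indicator_apply_le_abs {α Ω : Type*} {s : Set α} {g : α → Ω → ℝ} {K : ℝ}
    (h : ∀ u ∈ s, ∀ ω, |g u ω| ≤ K) (u : α) (ω : Ω) : |s.indicator g u ω| ≤ |K| := by
  by_cases hu : u ∈ s
  · simpa [hu] using (h u hu ω).trans (le_abs_self K)
  · simp [hu]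

theorem intervalIntegral_eq_integral_Ioc_indicator {Ω : Type*} {S₀ S₁ : ℝ} (hS : S₀ ≤ S₁)
    (g : ℝ → Ω → ℝ) (ω : Ω) :
    ∫ u in S₀..S₁, g u ω = ∫ u in Set.Ioc S₀ S₁, (Set.Icc S₀ S₁).indicator g u ω := by
  rw [intervalIntegral.integral_of_le hS]
  exact setIntegral_congr_fun measurableSet_Ioc fun u hu => by
    simp [Set.Ioc_subset_Icc_self hu]

theorem abs_integral_indicator_mul_four_le {Ω : Type*} [MeasurableSpace Ω] {P : Measure Ω}
    {g : ℝ → Ω → ℝ} {S₀ S₁ M κ : ℝ} (hM : 0 ≤ M)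
    (hcorr : ∀ r₁ r₂ r₃ r₄ : ℝ, S₀ ≤ r₁ → r₁ ≤ r₂ → r₂ ≤ r₃ → r₃ ≤ r₄ → r₄ ≤ S₁ →
      |∫ ω, g r₁ ω * g r₂ ω * g r₃ ω * g r₄ ω ∂P|
        ≤ M * Real.exp (-κ * (r₂ - r₁)) * Real.exp (-κ * (r₄ - r₃)))
    {a b c d : ℝ} (hab : a ≤ b) (hbc : b ≤ c) (hcd : c ≤ d) :
    |∫ ω, (Set.Icc S₀ S₁).indicator g a ω * (Set.Icc S₀ S₁).indicator g b ω *
        (Set.Icc S₀ S₁).indicator g c ω * (Set.Icc S₀ S₁).indicator g d ω ∂P|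
      ≤ M * (expKernel κ a b * expKernel κ c d) := by
  by_cases h : S₀ ≤ a ∧ d ≤ S₁
  · have hmem : ∀ {x}, a ≤ x → x ≤ d → (Set.Icc S₀ S₁).indicator g x = g x :=
      fun hax hxd => Set.indicator_of_mem (Set.mem_Icc.2 ⟨h.1.trans hax, hxd.trans h.2⟩) g
    rw [hmem le_rfl (hab.trans (hbc.trans hcd)), hmem hab (hbc.trans hcd),
      hmem (hab.trans hbc) hcd, hmem (hab.trans (hbc.trans hcd)) le_rfl,
      expKernel_of_le hab, expKernel_of_le hcd, ← mul_assoc]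
    exact hcorr a b c d h.1 hab hbc hcd h.2
  · have hzero : (Set.Icc S₀ S₁).indicator g a = 0 ∨ (Set.Icc S₀ S₁).indicator g d = 0 := by
      rw [not_and_or] at h
      refine h.imp (fun ha => Set.indicator_of_notMem ?_ g) (fun hd => Set.indicator_of_notMem ?_ g)
      · exact fun hmem => ha hmem.1
      · exact fun hmem => hd hmem.2
    have := mul_nonneg hM (mul_nonneg (expKernel_pos κ a b).le (expKernel_pos κ c d).le)
    rcases hzero with hzero | hzero <;> simpa [hzero] using this

/-- A fourth-moment bound from exponentially decaying four-point correlations: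
if `|E[g(r₁)g(r₂)g(r₃)g(r₄)]| ≤ M e^{−κ(r₂−r₁)} e^{−κ(r₄−r₃)}` for ordered times in
`[S₀, S₁]`, then `E[(∫_{S₀}^{S₁} g(u) du)⁴] ≤ 24 M κ^{−2} (S₁−S₀)²`. -/
theorem fourth_moment_bound {Ω : Type*} [MeasurableSpace Ω]
    (P : Measure Ω) [IsProbabilityMeasure P]
    (S₀ S₁ : ℝ) (hS : S₀ < S₁)
    (g : ℝ → Ω → ℝ) (hgmeas : Measurable (Function.uncurry g))
    (K : ℝ) (hgbdd : ∀ u ∈ Set.Icc S₀ S₁, ∀ ω, |g u ω| ≤ K)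
    (M κ : ℝ) (hM : 0 < M) (hκ : 0 < κ)
    (hcorr : ∀ r₁ r₂ r₃ r₄ : ℝ,
      S₀ ≤ r₁ → r₁ ≤ r₂ → r₂ ≤ r₃ → r₃ ≤ r₄ → r₄ ≤ S₁ →
      |∫ ω, g r₁ ω * g r₂ ω * g r₃ ω * g r₄ ω ∂P|
        ≤ M * Real.exp (-κ * (r₂ - r₁)) * Real.exp (-κ * (r₄ - r₃))) :
    (∫ ω, (∫ u in S₀..S₁, g u ω) ^ 4 ∂P)
      ≤ 24 * M * (κ ^ 2)⁻¹ * (S₁ - S₀) ^ 2 := by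
  set f := (Set.Icc S₀ S₁).indicator g
  set ν := volume.restrict (Set.Ioc S₀ S₁)
  have hJ : ∫ p, expKernel κ p.1 p.2 ∂ν.prod ν ≤ (S₁ - S₀) * (2 / κ) := by
    simpa [Real.volume_real_Ioc_of_le hS.le] using
      integral_prod_restrict_expKernel_le hκ (s := Set.Ioc S₀ S₁) measure_Ioc_lt_top.ne
  have hJ₀ : 0 ≤ ∫ p, expKernel κ p.1 p.2 ∂ν.prod ν :=
    integral_nonneg fun p => (expKernel_pos κ p.1 p.2).le
  calc ∫ ω, (∫ u in S₀..S₁, g u ω) ^ 4 ∂P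
      = ∫ z, ∫ ω, f z.1.1 ω * f z.1.2 ω * f z.2.1 ω * f z.2.2 ω ∂P ∂(ν.prod ν).prod (ν.prod ν) := by
        simp_rw [intervalIntegral_eq_integral_Ioc_indicator hS.le]
        exact integral_pow_four_integral_eq P ν
          (measurable_uncurry_indicator measurableSet_Icc hgmeas) (abs_indicator_apply_le_abs hgbdd)
    _ ≤ M * (3 * (∫ p, expKernel κ p.1 p.2 ∂ν.prod ν) ^ 2) :=
        integral_le_of_abs_le_mul_pairingSum ν (continuous_uncurry_expKernel κ).measurable
          (abs_expKernel_le_one hκ.le) fun z =>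
          abs_integral_mul_four_le_pairingSum P f hM.le (fun a b => (expKernel_pos κ a b).le)
            (expKernel_comm κ) (abs_integral_indicator_mul_four_le hM.le hcorr) _ _ _ _
    _ ≤ M * (3 * ((S₁ - S₀) * (2 / κ)) ^ 2) := by gcongr
    _ ≤ 24 * M * (κ ^ 2)⁻¹ * (S₁ - S₀) ^ 2 := by
        have : 0 ≤ M * (κ ^ 2)⁻¹ * (S₁ - S₀) ^ 2 := by positivity
        rw [mul_pow, div_pow, div_eq_mul_inv]
        linarith
end
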